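/- For fixed a ≥ 0, the function f(ε) := 3(3ε^2 + aε)/(ε − 10) on (10, ∞) attains its minimum at ε* = 10 + (1/6)√(3600 + 120a), and the minimum value equals f(ε*) = 3(√(30 + a) + √30)^2. -/

import Mathlib

/-!
Substituting `t = ε - 10` and `u = √(900 + 30a)` turns the objective into
`9t + u²/t + 3(60 + a) = 3(60 + a + 2u) + (3t - u)²/t`, so on `t > 0` it is minimal exactly at
`t = u/3`, with value `3(60 + a + 2u)`; and `60 + a + 2u = (√(30 + a) + √30)²`
because `√(30 + a) · √30 = u`.
-/

open Real

noncomputable def contractionBound (a ε : ℝ) : ℝ := 3 * (3 * ε ^ 2 + a * ε) / (ε - 10)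

section

variable {a u ε : ℝ}

lemma contractionBound_eq_add_sq_div (hu : u ^ 2 = 900 + 30 * a) (hε : ε ≠ 10) :
    contractionBound a ε = 3 * (60 + a + 2 * u) + (3 * (ε - 10) - u) ^ 2 / (ε - 10) := by
  have hε' : ε - 10 ≠ 0 := sub_ne_zero.2 hε
  rw [contractionBound]
  field_simp
  linear_combination -hu

lemma le_contractionBound (hu : u ^ 2 = 900 + 30 * a) (hε : 10 < ε) :
    3 * (60 + a + 2 * u) ≤ contractionBound a ε := by
  rw [contractionBound_eq_add_sq_div hu hε.ne']
  have : 0 ≤ (3 * (ε - 10) - u) ^ 2 / (ε - 10) := div_nonneg (sq_nonneg _) (by linarith)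
  linarith

lemma contractionBound_ten_add_div_three (hu : u ^ 2 = 900 + 30 * a) (hu0 : u ≠ 0) :
    contractionBound a (10 + u / 3) = 3 * (60 + a + 2 * u) := by
  rw [contractionBound_eq_add_sq_div hu (by simpa using hu0)]
  ring

end

lemma sq_sqrt_add_sqrt {x y : ℝ} (hx : 0 ≤ x) (hy : 0 ≤ y) :
    (√x + √y) ^ 2 = x + y + 2 * √(x * y) := by
  rw [add_sq, sq_sqrt hx, sq_sqrt hy, sqrt_mul hx]
  ring

/-- For fixed `a ≥ 0`, the function `f ε := 3(3ε² + aε)/(ε − 10)` on `(10, ∞)`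
attains its minimum at `ε* = 10 + (1/6)√(3600 + 120a)`, with minimal value
`3(√(30 + a) + √30)²`. -/
theorem contraction_min (a : ℝ) (ha : 0 ≤ a) :
    let εs : ℝ := 10 + (1 / 6) * Real.sqrt (3600 + 120 * a)
    (10 < εs) ∧
    (∀ ε : ℝ, 10 < ε →
      3 * (3 * εs ^ 2 + a * εs) / (εs - 10) ≤ 3 * (3 * ε ^ 2 + a * ε) / (ε - 10)) ∧
    3 * (3 * εs ^ 2 + a * εs) / (εs - 10) = 3 * (Real.sqrt (30 + a) + Real.sqrt 30) ^ 2 := by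
  intro εs
  set u := √(900 + 30 * a)
  have hu : u ^ 2 = 900 + 30 * a := sq_sqrt (by linarith)
  have hu_pos : 0 < u := sqrt_pos.2 (by linarith)
  have hεs : εs = 10 + u / 3 := by
    have : √(3600 + 120 * a) = 2 * u := by
      rw [show 3600 + 120 * a = 2 ^ 2 * (900 + 30 * a) by ring, sqrt_mul (by norm_num),
        sqrt_sq (by norm_num)]
    simp only [εs, this]
    ring
  have hmin : contractionBound a εs = 3 * (60 + a + 2 * u) := by
    rw [hεs, contractionBound_ten_add_div_three hu hu_pos.ne']
  refine ⟨by linarith, fun ε hε => ?_, ?_⟩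
  · change contractionBound a εs ≤ contractionBound a ε
    exact hmin ▸ le_contractionBound hu hε
  · change contractionBound a εs = _
    rw [hmin, sq_sqrt_add_sqrt (by linarith) (by norm_num),
      show (30 + a) * 30 = 900 + 30 * a by ring]
    ring
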